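/- Let B_r be the event that all connected components of G(n, α/n) have at most r vertices and L the event that G(n, α/n) contains no cycles. Then for all r ≥ 1, P(B_r) ≤ P(L) · (1 - α/n)^(-rn/2). -/

import Mathlib

open MeasureTheory Finset
open scoped ENNReal

noncomputable def bern (p : ℝ) : Measure Bool :=
  ENNReal.ofReal p • Measure.dirac true + ENNReal.ofReal (1 - p) • Measure.dirac false

noncomputable def erMeasure (n : ℕ) (p : ℝ) :
    Measure ({e : Sym2 (Fin n) // ¬ e.IsDiag} → Bool) :=
  Measure.pi fun _ => bern p

instance (p : ℝ) : IsFiniteMeasure (bern p) := by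
  constructor
  simp only [bern, Measure.coe_add, Measure.coe_smul, Pi.add_apply, Pi.smul_apply,
    smul_eq_mul]
  exact ENNReal.add_lt_top.2 ⟨ENNReal.mul_lt_top ENNReal.ofReal_lt_top (by simp),
    ENNReal.mul_lt_top ENNReal.ofReal_lt_top (by simp)⟩

lemma bern_singleton (p : ℝ) (b : Bool) :
    bern p {b} = if b then ENNReal.ofReal p else ENNReal.ofReal (1 - p) := by
  cases b <;> simp [bern, Measure.dirac_apply]

abbrev Slot (n : ℕ) := {e : Sym2 (Fin n) // ¬ e.IsDiag}
abbrev Cfg (n : ℕ) := Slot n → Bool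

lemma measurableSet_all {n : ℕ} (S : Set (Cfg n)) : MeasurableSet S := by
  have h1 : ∀ ω : Cfg n, MeasurableSet ({ω} : Set (Cfg n)) := by
    intro ω
    have : ({ω} : Set (Cfg n)) = ⋂ e, (fun f : Cfg n => f e) ⁻¹' {ω e} := by
      ext f; simp [funext_iff]
    rw [this]
    exact MeasurableSet.iInter fun e => (measurable_pi_apply e) (by simp)
  have : S = ⋃ ω ∈ S, {ω} := by simp
  rw [this]
  exact MeasurableSet.biUnion S.to_countable fun ω _ => h1 ω

lemma erMeasure_singleton {n : ℕ} (p : ℝ) (ω : Cfg n) :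
    erMeasure n p {ω} = ∏ e : Slot n, (if ω e then ENNReal.ofReal p else ENNReal.ofReal (1 - p)) := by
  have : ({ω} : Set (Cfg n)) = Set.univ.pi fun e => {ω e} := by
    ext f; simp [funext_iff, Set.mem_pi]
  rw [erMeasure, this, Measure.pi_pi]
  exact Finset.prod_congr rfl fun e _ => bern_singleton p (ω e)

open scoped Classical in
lemma erMeasure_set {n : ℕ} (p : ℝ) (S : Set (Cfg n)) :
    erMeasure n p S = ∑ ω ∈ Finset.univ.filter (· ∈ S), erMeasure n p {ω} := by
  classical
  have h : S = ⋃ ω ∈ (Finset.univ.filter (· ∈ S) : Finset (Cfg n)), ({ω} : Set (Cfg n)) := by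
    ext f; simp
  conv_lhs => rw [h]
  rw [measure_biUnion_finset (fun a _ b _ hab => by
    simp [Function.onFun, Set.disjoint_singleton_left, hab]) (fun ω _ => measurableSet_all _)]

def erGraph (n : ℕ) (ω : {e : Sym2 (Fin n) // ¬ e.IsDiag} → Bool) : SimpleGraph (Fin n) :=
  SimpleGraph.fromEdgeSet {e : Sym2 (Fin n) | ∃ h : ¬ e.IsDiag, ω ⟨e, h⟩ = true}

lemma erGraph_adj {n : ℕ} (ω : Cfg n) (u v : Fin n) (h : u ≠ v) :
    (erGraph n ω).Adj u v ↔ ω ⟨s(u,v), by simp [Sym2.mk_isDiag_iff, h]⟩ = true := by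
  rw [erGraph, SimpleGraph.fromEdgeSet_adj]
  constructor
  · rintro ⟨⟨h', hω⟩, -⟩
    convert hω
  · intro hω
    exact ⟨⟨by simp [Sym2.mk_isDiag_iff, h], hω⟩, h⟩

lemma erGraph_update_false {n : ℕ} (ω : Cfg n) (e : Slot n) :
    erGraph n (Function.update ω e false) =
      erGraph n ω \ SimpleGraph.fromEdgeSet {e.val} := by
  ext u v
  rw [SimpleGraph.sdiff_adj, SimpleGraph.fromEdgeSet_adj]
  by_cases huv : u = v
  · subst huv; simp
  constructor
  · intro hadj
    rw [erGraph_adj _ _ _ huv] at hadj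
    by_cases he : (⟨s(u,v), by simp [Sym2.mk_isDiag_iff, huv]⟩ : Slot n) = e
    · rw [he, Function.update_self] at hadj; exact absurd hadj (by simp)
    · rw [Function.update_of_ne he] at hadj
      refine ⟨(erGraph_adj ω u v huv).2 hadj, ?_⟩
      rintro ⟨hmem, -⟩
      exact he (Subtype.ext hmem)
  · rintro ⟨hadj, hne⟩
    rw [erGraph_adj _ _ _ huv] at hadj ⊢
    have he : (⟨s(u,v), by simp [Sym2.mk_isDiag_iff, huv]⟩ : Slot n) ≠ e := by
      intro hh
      exact hne ⟨by rw [← hh]; rfl, huv⟩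
    rw [Function.update_of_ne he]
    exact hadj

lemma reach_of_delete {V : Type*} {G : SimpleGraph V} {v w : V}
    (hvw : (G \ SimpleGraph.fromEdgeSet {s(v,w)}).Reachable v w) :
    ∀ x y, G.Reachable x y → (G \ SimpleGraph.fromEdgeSet {s(v,w)}).Reachable x y := by
  intro x y ⟨p⟩
  induction p with
  | nil => exact SimpleGraph.Reachable.refl _
  | @cons a b c hab q ih =>
    refine SimpleGraph.Reachable.trans ?_ ih
    by_cases he : s(a,b) = s(v,w)
    · rcases Sym2.eq_iff.1 he with ⟨rfl, rfl⟩ | ⟨rfl, rfl⟩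
      · exact hvw
      · exact hvw.symm
    · exact SimpleGraph.Adj.reachable ⟨hab, by simp [SimpleGraph.fromEdgeSet_adj, he]⟩

open scoped Classical

def SameReach {n : ℕ} (ω' ω : Cfg n) : Prop :=
  ∀ x y : Fin n, (erGraph n ω').Reachable x y ↔ (erGraph n ω).Reachable x y

open scoped Classical in
noncomputable def phiEx {n : ℕ} (ω : Cfg n) :
    ∃ b ∈ Finset.univ.filter
        (fun ω' => (∀ e, ω' e = true → ω e = true) ∧ SameReach ω' ω),
      ∀ b' ∈ Finset.univ.filter
        (fun ω' => (∀ e, ω' e = true → ω e = true) ∧ SameReach ω' ω),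
        (Finset.univ.filter fun e => b e = true).card ≤
          (Finset.univ.filter fun e => b' e = true).card :=
  Finset.exists_min_image _ _ ⟨ω, by simp [SameReach]⟩

noncomputable def phi {n : ℕ} (ω : Cfg n) : Cfg n := (phiEx ω).choose

lemma phi_le {n : ℕ} (ω : Cfg n) : ∀ e, phi ω e = true → ω e = true := by
  have := (phiEx ω).choose_spec.1
  rw [Finset.mem_filter] at this
  exact this.2.1

lemma phi_sameReach {n : ℕ} (ω : Cfg n) : SameReach (phi ω) ω := by
  have := (phiEx ω).choose_spec.1
  rw [Finset.mem_filter] at this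
  exact this.2.2

lemma phi_acyclic {n : ℕ} (ω : Cfg n) : (erGraph n (phi ω)).IsAcyclic := by
  by_contra hcy
  rw [SimpleGraph.isAcyclic_iff_forall_adj_isBridge] at hcy
  push_neg at hcy
  obtain ⟨v, w, hadj, hnb⟩ := hcy
  rw [SimpleGraph.isBridge_iff] at hnb
  push_neg at hnb
  have hreach : (erGraph n (phi ω) \ SimpleGraph.fromEdgeSet {s(v,w)}).Reachable v w := hnb
  have hvw : v ≠ w := hadj.ne
  set e : Slot n := ⟨s(v,w), by simp [Sym2.mk_isDiag_iff, hvw]⟩ with he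
  set ω'' : Cfg n := Function.update (phi ω) e false with hω''
  have h1 : erGraph n ω'' = erGraph n (phi ω) \ SimpleGraph.fromEdgeSet {s(v,w)} :=
    erGraph_update_false (phi ω) e
  have hsr : SameReach ω'' ω := by
    intro x y
    rw [← phi_sameReach ω x y]
    constructor
    · intro hr
      refine hr.mono ?_
      rw [h1]; exact sdiff_le
    · intro hr
      rw [h1]
      exact reach_of_delete hreach x y hr
  have hle : ∀ e', ω'' e' = true → ω e' = true := by
    intro e' h'
    by_cases hee : e' = e
    · subst hee; rw [hω'', Function.update_self] at h'; exact absurd h' (by simp)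
    · rw [hω'', Function.update_of_ne hee] at h'
      exact phi_le ω e' h'
  have hmem : ω'' ∈ Finset.univ.filter
      (fun ω' => (∀ e, ω' e = true → ω e = true) ∧ SameReach ω' ω) := by
    rw [Finset.mem_filter]; exact ⟨Finset.mem_univ _, hle, hsr⟩
  have hmin := (phiEx ω).choose_spec.2 ω'' hmem
  have hlt : (Finset.univ.filter fun e' => ω'' e' = true).card <
      (Finset.univ.filter fun e' => phi ω e' = true).card := by
    apply Finset.card_lt_card
    constructor
    · intro e' h'
      rw [Finset.mem_filter] at h' ⊢
      refine ⟨Finset.mem_univ _, ?_⟩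
      by_cases hee : e' = e
      · subst hee; rw [hω'', Function.update_self] at h'; exact absurd h'.2 (by simp)
      · rw [hω''] at h'; rw [← Function.update_of_ne hee (false : Bool) (phi ω)]
        exact h'.2
    · intro hsub
      have : e ∈ Finset.univ.filter fun e' => phi ω e' = true := by
        rw [Finset.mem_filter]
        exact ⟨Finset.mem_univ _, (erGraph_adj (phi ω) v w hvw).1 hadj⟩
      have := hsub this
      rw [Finset.mem_filter, hω'', Function.update_self] at this
      exact absurd this.2 (by simp)
  exact absurd hmin (not_le.2 hlt)

def reachGraph {n : ℕ} (ω' : Cfg n) : SimpleGraph (Fin n) where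
  Adj v w := v ≠ w ∧ (erGraph n ω').Reachable v w
  symm := ⟨fun v w ⟨h1, h2⟩ => ⟨h1.symm, h2.symm⟩⟩
  loopless := ⟨fun v ⟨h1, _⟩ => h1 rfl⟩

open scoped Classical in
lemma count_slots {n r : ℕ} (ω' : Cfg n)
    (hc : ∀ v, ({w | (erGraph n ω').Reachable v w}).ncard ≤ r) :
    2 * (Finset.univ.filter fun e : Slot n =>
        e.val ∈ (reachGraph ω').edgeSet).card ≤ n * r := by
  have h1 : (Finset.univ.filter fun e : Slot n =>
      e.val ∈ (reachGraph ω').edgeSet).card ≤ (reachGraph ω').edgeFinset.card := by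
    apply Finset.card_le_card_of_injOn (fun e => e.val)
    · intro e he
      rw [Finset.mem_coe, Finset.mem_filter] at he
      rw [Finset.mem_coe, SimpleGraph.mem_edgeFinset]
      exact he.2
    · intro a _ b _ hab
      exact Subtype.ext hab
  have h2 : ∀ v : Fin n, (reachGraph ω').degree v ≤ r - 1 := by
    intro v
    have hfin : ({w | (erGraph n ω').Reachable v w}).Finite := Set.toFinite _
    rw [SimpleGraph.degree]
    have hsub : (reachGraph ω').neighborFinset v ⊆ hfin.toFinset.erase v := by
      intro w hw
      rw [SimpleGraph.mem_neighborFinset] at hw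
      rw [Finset.mem_erase, Set.Finite.mem_toFinset]
      exact ⟨hw.1.symm, hw.2⟩
    calc ((reachGraph ω').neighborFinset v).card ≤ (hfin.toFinset.erase v).card :=
          Finset.card_le_card hsub
      _ = hfin.toFinset.card - 1 := by
          rw [Finset.card_erase_of_mem]
          rw [Set.Finite.mem_toFinset]
          exact SimpleGraph.Reachable.refl v
      _ ≤ r - 1 := by
          have h := hc v
          rw [Set.ncard_eq_toFinset_card _ hfin] at h
          omega
  calc 2 * (Finset.univ.filter fun e : Slot n =>
        e.val ∈ (reachGraph ω').edgeSet).card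
      ≤ 2 * (reachGraph ω').edgeFinset.card := by omega
    _ = ∑ v : Fin n, (reachGraph ω').degree v :=
        (SimpleGraph.sum_degrees_eq_twice_card_edges _).symm
    _ ≤ ∑ _v : Fin n, (r - 1) := Finset.sum_le_sum fun v _ => h2 v
    _ = n * (r - 1) := by simp [Finset.sum_const, mul_comm]
    _ ≤ n * r := Nat.mul_le_mul_left _ (Nat.sub_le _ _)

theorem small_components_le_no_cycles (n r : ℕ) (hn : 1 ≤ n) (hr : 1 ≤ r)
    (α : ℝ) (hα0 : 0 ≤ α) (hαn : α < n) :
    erMeasure n (α / n)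
        {ω | ∀ v : Fin n, ({w : Fin n | (erGraph n ω).Reachable v w}).ncard ≤ r} ≤
      erMeasure n (α / n) {ω | (erGraph n ω).IsAcyclic} *
        ENNReal.ofReal ((1 - α / n) ^ (-((r : ℝ) * n) / 2)) := by
  classical
  have hn0 : (0:ℝ) < n := by exact_mod_cast Nat.lt_of_lt_of_le Nat.zero_lt_one hn
  set p : ℝ := α / n with hp
  have hp0 : 0 ≤ p := div_nonneg hα0 hn0.le
  have hp1 : p < 1 := (div_lt_one hn0).2 hαn
  set P : ℝ≥0∞ := ENNReal.ofReal p with hP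
  set Q : ℝ≥0∞ := ENNReal.ofReal (1 - p) with hQ
  have hQ0 : Q ≠ 0 := (ENNReal.ofReal_pos.2 (by linarith)).ne'
  have hQtop : Q ≠ ⊤ := ENNReal.ofReal_ne_top
  have hQ1 : Q ≤ 1 := by
    rw [hQ, ← ENNReal.ofReal_one]
    exact ENNReal.ofReal_le_ofReal (by linarith)
  have hPQ : P + Q = 1 := by
    rw [hP, hQ, ← ENNReal.ofReal_add hp0 (by linarith)]
    norm_num
  set Bset : Set (Cfg n) :=
    {ω | ∀ v : Fin n, ({w : Fin n | (erGraph n ω).Reachable v w}).ncard ≤ r} with hBset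
  set Lset : Set (Cfg n) := {ω | (erGraph n ω).IsAcyclic} with hLset
  set C : ℝ≥0∞ := ENNReal.ofReal ((1 - p) ^ (-((r : ℝ) * n) / 2)) with hC
  set B : Finset (Cfg n) := Finset.univ.filter (· ∈ Bset) with hB
  set Lf : Finset (Cfg n) := Finset.univ.filter (· ∈ Lset) with hL
  set t : Finset (Cfg n) := Finset.univ.filter
    (fun ω' => (erGraph n ω').IsAcyclic ∧
      ∀ v : Fin n, ({w : Fin n | (erGraph n ω').Reachable v w}).ncard ≤ r) with ht
  set w : Cfg n → ℝ≥0∞ := fun ω => ∏ e : Slot n, (if ω e then P else Q) with hw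
  have hsingle : ∀ ω : Cfg n, erMeasure n p {ω} = w ω := fun ω => erMeasure_singleton p ω
  -- phi maps B to t
  have hmaps : ∀ ω ∈ B, phi ω ∈ t := by
    intro ω hω
    rw [hB, Finset.mem_filter] at hω
    rw [ht, Finset.mem_filter]
    refine ⟨Finset.mem_univ _, phi_acyclic ω, fun v => ?_⟩
    have : {w : Fin n | (erGraph n (phi ω)).Reachable v w}
        = {w : Fin n | (erGraph n ω).Reachable v w} := by
      ext x; exact phi_sameReach ω v x
    rw [this]
    exact hω.2 v
  -- fiber bound
  have hfiber : ∀ ω' ∈ t, ∑ ω ∈ B.filter (fun ω => phi ω = ω'), w ω ≤ w ω' * C := by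
    intro ω' hω'
    rw [ht, Finset.mem_filter] at hω'
    obtain ⟨-, hac, hsmall⟩ := hω'
    set InC : Slot n → Prop := fun e => e.val ∈ (reachGraph ω').edgeSet with hInC
    set A : Slot n → Finset Bool := fun e =>
      if ω' e = true then {true} else if InC e then Finset.univ else {false} with hA
    -- the fiber is inside the box
    have hsub : B.filter (fun ω => phi ω = ω') ⊆ Fintype.piFinset A := by
      intro ω hω
      rw [Finset.mem_filter, hB, Finset.mem_filter] at hω
      obtain ⟨⟨-, hωB⟩, hphi⟩ := hω
      have hInCω : ∀ e : Slot n, ω e = true → InC e := by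
        rintro ⟨ev, hd⟩ h
        induction ev using Sym2.ind with
        | _ u v =>
          have hne : u ≠ v := fun h' => hd (by simp [h', Sym2.mk_isDiag_iff])
          have hadj : (erGraph n ω).Adj u v := (erGraph_adj ω u v hne).2 h
          have hreach : (erGraph n ω').Reachable u v := by
            rw [← hphi]
            exact (phi_sameReach ω u v).2 hadj.reachable
          exact (SimpleGraph.mem_edgeSet (reachGraph ω')).2 ⟨hne, hreach⟩
      rw [Fintype.mem_piFinset]
      intro e
      by_cases h1 : ω' e = true
      · have : ω e = true := by
          rw [← hphi] at h1
          exact phi_le ω e h1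
        simp [hA, h1, this]
      · by_cases h2 : InC e
        · simp [hA, h1, h2]
        · have : ω e = false := by
            by_contra hcon
            exact h2 (hInCω e (by simpa using hcon))
          simp [hA, h1, h2, this]
    set k : ℕ := (Finset.univ.filter fun e : Slot n => InC e ∧ ω' e = false).card with hk
    have hbox : ∑ ω ∈ Fintype.piFinset A, w ω = w ω' * Q⁻¹ ^ k := by
      rw [hw]
      rw [← Finset.prod_univ_sum A (fun _ b => if b then P else Q)]
      have hper : ∀ e : Slot n, (∑ b ∈ A e, if b then P else Q)
          = (if ω' e then P else Q) * (if (InC e ∧ ω' e = false) then Q⁻¹ else 1) := by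
        intro e
        by_cases h1 : ω' e = true
        · simp [hA, h1]
        · have h1' : ω' e = false := by simpa using h1
          by_cases h2 : InC e
          · simp only [hA, h1', if_false, Bool.false_eq_true, h2, if_true, and_self, and_true]
            rw [Fintype.sum_bool, if_pos rfl, if_neg (by simp)]
            rw [hPQ]
            exact (ENNReal.mul_inv_cancel hQ0 hQtop).symm
          · simp [hA, h1, h2, h1']
      rw [Finset.prod_congr rfl (fun e _ => hper e), Finset.prod_mul_distrib]
      congr 1
      rw [Finset.prod_ite, Finset.prod_const, Finset.prod_const_one, mul_one, hk]
    have hkbound : (k : ℝ) ≤ (r : ℝ) * n / 2 := by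
      have hk1 : k ≤ (Finset.univ.filter fun e : Slot n => InC e).card := by
        apply Finset.card_le_card
        intro e he
        rw [Finset.mem_filter] at he ⊢
        exact ⟨he.1, he.2.1⟩
      have hk2 := count_slots ω' hsmall
      have : 2 * k ≤ n * r := le_trans (Nat.mul_le_mul_left 2 hk1) hk2
      have h2 : (2 : ℝ) * k ≤ (n : ℝ) * r := by exact_mod_cast this
      linarith
    have hpow : Q⁻¹ ^ k ≤ C := by
      have e1 : Q⁻¹ ^ k = Q ^ (-(k : ℝ)) := by
        rw [ENNReal.rpow_neg, ENNReal.rpow_natCast]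
        exact ENNReal.inv_pow.symm
      rw [e1, hC, ← ENNReal.ofReal_rpow_of_pos (by linarith : (0:ℝ) < 1 - p)]
      exact ENNReal.rpow_le_rpow_of_exponent_ge hQ1 (by linarith)
    calc ∑ ω ∈ B.filter (fun ω => phi ω = ω'), w ω
        ≤ ∑ ω ∈ Fintype.piFinset A, w ω :=
          Finset.sum_le_sum_of_subset hsub
      _ = w ω' * Q⁻¹ ^ k := hbox
      _ ≤ w ω' * C := mul_le_mul_right hpow _
  -- put it together
  have hBL : t ⊆ Lf := by
    intro ω' hω'
    rw [ht, Finset.mem_filter] at hω'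
    rw [hL, Finset.mem_filter]
    exact ⟨Finset.mem_univ _, hω'.2.1⟩
  calc erMeasure n p Bset = ∑ ω ∈ B, w ω := by
        rw [erMeasure_set, hB]
        exact Finset.sum_congr (by congr!) fun ω _ => hsingle ω
    _ = ∑ ω' ∈ t, ∑ ω ∈ B.filter (fun ω => phi ω = ω'), w ω :=
        (Finset.sum_fiberwise_of_maps_to hmaps w).symm
    _ ≤ ∑ ω' ∈ t, w ω' * C := Finset.sum_le_sum hfiber
    _ = (∑ ω' ∈ t, w ω') * C := (Finset.sum_mul _ _ _).symm
    _ ≤ (∑ ω' ∈ Lf, w ω') * C := by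
        exact mul_le_mul_left (Finset.sum_le_sum_of_subset hBL) C
    _ = erMeasure n p Lset * C := by
        rw [erMeasure_set, hL]
        exact congrArg (· * C) (Finset.sum_congr (by congr!) fun ω _ => (hsingle ω).symm)
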